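/- In Example 1, for every point q ∈ M = {G₁ = c₁, G₂ = c₂} (c₁ > c₂ > 0) that lies outside the union of the two critical sets {x₁²+y₁² = √c₁, x₂ = y₂ = 0, x₃²+y₃² = c₂} and {x₁²+y₁² = √(c₁−c₂), x₂²+y₂² = c₂, x₃ = y₃ = 0}, the vector Z₁(q) does not belong to the kernel of ω₀ restricted to T_qM; that is, there exists v ∈ T_qM with ω₀(Z₁(q), v) ≠ 0. -/

import Mathlib

/-!
Write `r_j = ‖q_j‖²`. Then `dG₁(q) = 4 r₀ ⟪q₀, ·⟫ + 2 ⟪q₁, ·⟫`, `dG₂(q) = 2 ⟪q₁, ·⟫ + 2 ⟪q₂, ·⟫` and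
`ω₀(Z₁(q), ·) = 2π Σ_j ⟪q_j, ·⟫`. Off the two critical sets (and using `c₂ < c₁` for `q₀`) every
`q_j` is nonzero, so radial vectors `v_j = t_j q_j` realise arbitrary pairings `⟪q_j, v_j⟫`, and
on these pairings the three functionals are linearly independent.
-/

open Real Complex
noncomputable section

/-- `G₁ = (x₁² + y₁²)² + x₂² + y₂²` on `ℝ⁶ ≃ ℂ³` (via `z_j = x_j + i y_j`). -/
def G₁ (z : Fin 3 → ℂ) : ℝ :=
  ((z 0).re ^ 2 + (z 0).im ^ 2) ^ 2 + (z 1).re ^ 2 + (z 1).im ^ 2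

/-- `G₂ = x₂² + y₂² + x₃² + y₃²`. -/
def G₂ (z : Fin 3 → ℂ) : ℝ :=
  (z 1).re ^ 2 + (z 1).im ^ 2 + (z 2).re ^ 2 + (z 2).im ^ 2

/-- `Z₁(z)_j = 2πi z_j`, i.e. `Z₁ = Σ_{j=1}^{3} (−2πy_j ∂/∂x_j + 2πx_j ∂/∂y_j)`. -/
def Z₁ (z : Fin 3 → ℂ) : Fin 3 → ℂ := fun j => (2 * π : ℝ) * Complex.I * z j

/-- The standard symplectic form `ω₀ = Σ_j dy_j ∧ dx_j` on `ℝ⁶ ≃ ℂ³`: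
`ω₀(u, v) = Σ_j (u_{y_j} v_{x_j} − u_{x_j} v_{y_j})`. -/
def ω₀ (u v : Fin 3 → ℂ) : ℝ :=
  ∑ j : Fin 3, ((u j).im * (v j).re - (u j).re * (v j).im)

/-- `M = {G₁ = c₁, G₂ = c₂}`. -/
def Mset (c₁ c₂ : ℝ) : Set (Fin 3 → ℂ) := {z | G₁ z = c₁ ∧ G₂ z = c₂}

/-- The maximum critical set `{z ∈ M : x₁² + y₁² = √c₁, x₂ = y₂ = 0, x₃² + y₃² = c₂}`. -/
def maxSet (c₁ c₂ : ℝ) : Set (Fin 3 → ℂ) :=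
  {z ∈ Mset c₁ c₂ | (z 0).re ^ 2 + (z 0).im ^ 2 = Real.sqrt c₁ ∧ z 1 = 0 ∧
    (z 2).re ^ 2 + (z 2).im ^ 2 = c₂}

/-- The minimum critical set `{z ∈ M : x₁² + y₁² = √(c₁ − c₂), x₂² + y₂² = c₂, x₃ = y₃ = 0}`. -/
def minSet (c₁ c₂ : ℝ) : Set (Fin 3 → ℂ) :=
  {z ∈ Mset c₁ c₂ | (z 0).re ^ 2 + (z 0).im ^ 2 = Real.sqrt (c₁ - c₂) ∧
    (z 1).re ^ 2 + (z 1).im ^ 2 = c₂ ∧ z 2 = 0}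

open scoped InnerProductSpace

lemma re_sq_add_im_sq_eq_norm_sq (z : ℂ) : z.re ^ 2 + z.im ^ 2 = ‖z‖ ^ 2 := by
  rw [Complex.sq_norm, normSq_apply]
  ring

lemma G₁_eq_norm : G₁ = fun z => (‖z 0‖ ^ 2) ^ 2 + ‖z 1‖ ^ 2 := by
  funext z
  simp only [G₁, ← re_sq_add_im_sq_eq_norm_sq]
  ring

lemma G₂_eq_norm : G₂ = fun z => ‖z 1‖ ^ 2 + ‖z 2‖ ^ 2 := by
  funext z
  simp only [G₂, ← re_sq_add_im_sq_eq_norm_sq]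
  ring

lemma fderiv_G₁_apply (q v : Fin 3 → ℂ) :
    fderiv ℝ G₁ q v = 4 * ‖q 0‖ ^ 2 * ⟪q 0, v 0⟫_ℝ + 2 * ⟪q 1, v 1⟫_ℝ := by
  rw [G₁_eq_norm, ((((hasFDerivAt_apply 0 q).norm_sq).pow 2).fun_add
    (hasFDerivAt_apply 1 q).norm_sq).fderiv]
  simp only [add_apply, smul_apply,
    ContinuousLinearMap.comp_apply, innerSL_apply_apply, ContinuousLinearMap.proj_apply]
  ring

lemma fderiv_G₂_apply (q v : Fin 3 → ℂ) :
    fderiv ℝ G₂ q v = 2 * ⟪q 1, v 1⟫_ℝ + 2 * ⟪q 2, v 2⟫_ℝ := by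
  rw [G₂_eq_norm, (((hasFDerivAt_apply 1 q).norm_sq).fun_add
    (hasFDerivAt_apply 2 q).norm_sq).fderiv]
  simp only [add_apply, smul_apply,
    ContinuousLinearMap.comp_apply, innerSL_apply_apply, ContinuousLinearMap.proj_apply]
  ring

lemma ω₀_Z₁_apply (q v : Fin 3 → ℂ) : ω₀ (Z₁ q) v = 2 * π * ∑ j, ⟪q j, v j⟫_ℝ := by
  simp only [ω₀, Z₁, Complex.inner, Finset.mul_sum]
  refine Finset.sum_congr rfl fun j _ => ?_
  simp only [mul_re, mul_im, I_re, I_im, ofReal_re, ofReal_im, conj_re, conj_im]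
  ring

lemma mem_Mset_iff {c₁ c₂ : ℝ} {q : Fin 3 → ℂ} :
    q ∈ Mset c₁ c₂ ↔ (‖q 0‖ ^ 2) ^ 2 + ‖q 1‖ ^ 2 = c₁ ∧ ‖q 1‖ ^ 2 + ‖q 2‖ ^ 2 = c₂ := by
  rw [Mset, G₁_eq_norm, G₂_eq_norm]
  rfl

lemma apply_one_ne_zero_of_notMem_maxSet {c₁ c₂ : ℝ} {q : Fin 3 → ℂ} (hq : q ∈ Mset c₁ c₂)
    (hmax : q ∉ maxSet c₁ c₂) : q 1 ≠ 0 := by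
  intro hq₁
  obtain ⟨hG₁, hG₂⟩ := mem_Mset_iff.1 hq
  simp only [hq₁, norm_zero] at hG₁ hG₂
  refine hmax ⟨hq, ?_, hq₁, ?_⟩
  · rw [re_sq_add_im_sq_eq_norm_sq, ← hG₁]
    simp [Real.sqrt_sq]
  · rw [re_sq_add_im_sq_eq_norm_sq]
    linarith

lemma apply_two_ne_zero_of_notMem_minSet {c₁ c₂ : ℝ} {q : Fin 3 → ℂ} (hq : q ∈ Mset c₁ c₂)
    (hmin : q ∉ minSet c₁ c₂) : q 2 ≠ 0 := by
  intro hq₂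
  obtain ⟨hG₁, hG₂⟩ := mem_Mset_iff.1 hq
  simp only [hq₂, norm_zero] at hG₂
  refine hmin ⟨hq, ?_, ?_, hq₂⟩
  · rw [re_sq_add_im_sq_eq_norm_sq, ← hG₁, ← hG₂]
    simp [Real.sqrt_sq]
  · rw [re_sq_add_im_sq_eq_norm_sq]
    linarith

lemma apply_zero_ne_zero_of_mem_Mset {c₁ c₂ : ℝ} (h₁₂ : c₂ < c₁) {q : Fin 3 → ℂ}
    (hq : q ∈ Mset c₁ c₂) : q 0 ≠ 0 := by
  intro hq₀
  obtain ⟨hG₁, hG₂⟩ := mem_Mset_iff.1 hq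
  simp only [hq₀, norm_zero] at hG₁
  nlinarith [sq_nonneg ‖q 2‖]

lemma exists_tangent_ω₀_Z₁_ne_zero {q : Fin 3 → ℂ} (h₀ : q 0 ≠ 0) (h₁ : q 1 ≠ 0)
    (h₂ : q 2 ≠ 0) :
    ∃ v : Fin 3 → ℂ, fderiv ℝ G₁ q v = 0 ∧ fderiv ℝ G₂ q v = 0 ∧ ω₀ (Z₁ q) v ≠ 0 := by
  set r : Fin 3 → ℝ := fun j => ‖q j‖ ^ 2
  have hr : ∀ j, q j ≠ 0 → r j ≠ 0 := fun j hj => pow_ne_zero 2 (norm_ne_zero_iff.2 hj)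
  -- The pairings `⟪q j, v j⟫ = t j * r j` must be orthogonal to `(2 r₀, 1, 0)` and `(0, 1, 1)`,
  -- so proportional to their cross product `(1, -2 r₀, 2 r₀)`, whose coordinate sum is nonzero.
  let t : Fin 3 → ℝ := ![r 1 * r 2, -2 * r 0 ^ 2 * r 2, 2 * r 0 ^ 2 * r 1]
  have hpair : ∀ j, ⟪q j, t j • q j⟫_ℝ = t j * r j := fun j => by
    rw [real_inner_smul_right, real_inner_self_eq_norm_sq]
  refine ⟨fun j => t j • q j, ?_, ?_, ?_⟩
  · rw [fderiv_G₁_apply, hpair, hpair]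
    simp only [t, Matrix.cons_val_zero, Matrix.cons_val_one]
    ring
  · rw [fderiv_G₂_apply, hpair, hpair]
    simp only [t, Matrix.cons_val_one, Matrix.cons_val]
    ring
  · have hsum : t 0 * r 0 + t 1 * r 1 + t 2 * r 2 = r 0 * r 1 * r 2 := by
      simp only [t, Matrix.cons_val_zero, Matrix.cons_val_one, Matrix.cons_val]
      ring
    rw [ω₀_Z₁_apply, Fin.sum_univ_three, hpair, hpair, hpair, hsum]
    exact mul_ne_zero (by positivity) (mul_ne_zero (mul_ne_zero (hr 0 h₀) (hr 1 h₁)) (hr 2 h₂))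

theorem example_one_Z1_not_in_ker_general (c₁ c₂ : ℝ) (h₁₂ : c₂ < c₁) :
    ∀ q ∈ Mset c₁ c₂ \ (maxSet c₁ c₂ ∪ minSet c₁ c₂),
      ∃ v : Fin 3 → ℂ,
        fderiv ℝ G₁ q v = 0 ∧ fderiv ℝ G₂ q v = 0 ∧ ω₀ (Z₁ q) v ≠ 0 := by
  rintro q ⟨hq, hcrit⟩
  exact exists_tangent_ω₀_Z₁_ne_zero (apply_zero_ne_zero_of_mem_Mset h₁₂ hq)
    (apply_one_ne_zero_of_notMem_maxSet hq fun h => hcrit (Or.inl h))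
    (apply_two_ne_zero_of_notMem_minSet hq fun h => hcrit (Or.inr h))

/-- **Example 1 of the paper, `Z₁ ∉ ker(ω₀|_M)` away from the critical sets.**
For every `q ∈ M` outside the union of the two critical sets, the vector `Z₁(q)` does not
belong to the kernel of `ω₀` restricted to `T_qM = ker dG₁(q) ∩ ker dG₂(q)`: there is a
tangent vector `v ∈ T_qM` with `ω₀(Z₁(q), v) ≠ 0`. -/
theorem example_one_Z1_not_in_ker (c₁ c₂ : ℝ) (h₁₂ : c₂ < c₁) (h₂ : 0 < c₂) :
    ∀ q ∈ Mset c₁ c₂ \ (maxSet c₁ c₂ ∪ minSet c₁ c₂),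
      ∃ v : Fin 3 → ℂ,
        fderiv ℝ G₁ q v = 0 ∧ fderiv ℝ G₂ q v = 0 ∧ ω₀ (Z₁ q) v ≠ 0 :=
  example_one_Z1_not_in_ker_general c₁ c₂ h₁₂
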